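/- arXiv:2506.01832 — 3 statements merged into one kernel-verified Lean document; each statement's English description precedes it below -/
import Mathlib

section
/- Let g : {0,1}^w → S be a non-constant function into any set S. If T_1,…,T_w are independent Bernoulli(p) random variables and U is uniform on {0,1}^w independent of T, then with probability at least p·((1−p)/2)^{w−1}, the restricted function x ↦ g(U ⊕ (T ∧ x)) is a non-constant function of a single bit. -/
/-!
A non-constant `g` on the cube has a sensitive edge `{a, a ⊕ e_j}`: walking between two
points with different values one coordinate at a time, some step changes the value of `g`.
Whenever `T = e_j` and `U` is an endpoint of that edge, the restriction is a non-constant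
function of the single bit `j`. These two events have probability `p (1 - p)^{w-1} / 2^w`
each, which sums to the bound.
-/

open scoped Classical

open Function Finset

section SensitiveCoordinate

variable {ι β S : Type*} [DecidableEq ι]

theorem apply_eq_of_forall_apply_update_eq [Fintype ι] {g : (ι → β) → S}
    (hg : ∀ a j b, g (update a j b) = g a) (x y : ι → β) : g x = g y := by
  have key : ∀ s : Finset ι, g (s.piecewise y x) = g x := by
    intro s
    induction s using Finset.induction_on with
    | empty => rw [piecewise_empty]
    | insert i s _ ih => rw [piecewise_insert, hg, ih]
  rw [← key univ, piecewise_univ]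

theorem exists_apply_update_not_ne [Fintype ι] {g : (ι → Bool) → S}
    (hg : ∃ x y, g x ≠ g y) :
    ∃ a j, g (update a j (!a j)) ≠ g a := by
  by_contra! h
  obtain ⟨x, y, hxy⟩ := hg
  refine hxy (apply_eq_of_forall_apply_update_eq (fun a j b => ?_) x y)
  by_cases hb : b = a j
  · rw [hb, update_eq_self]
  · rw [Bool.eq_not_iff.mpr hb, h]

end SensitiveCoordinate

theorem xor_and_decide_eq_update {ι : Type*} [DecidableEq ι] (u x : ι → Bool) (j : ι) :
    (fun i => xor (u i) (decide (i = j) && x i)) = update u j (xor (u j) (x j)) := by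
  ext i
  by_cases hi : i = j <;> simp [hi]

theorem prod_ite_eq_mul_pow {ι M : Type*} [Fintype ι] [DecidableEq ι] [CommMonoid M]
    (j : ι) (p q : M) :
    ∏ i, (if i = j then p else q) = p * q ^ (Fintype.card ι - 1) := by
  rw [Fintype.prod_eq_mul_prod_compl j, if_pos rfl,
    prod_congr rfl fun i hi => if_neg (by simpa using hi), prod_const, card_compl, card_singleton]

theorem single_bit_restriction_nonconstant {ι S : Type*} [DecidableEq ι]
    {g : (ι → Bool) → S} {u : ι → Bool} {j : ι} (h : g (update u j (!u j)) ≠ g u) :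
    (∃! i, decide (i = j) = true) ∧ ∃ x y : ι → Bool,
      g (fun i => xor (u i) (decide (i = j) && x i)) ≠
        g (fun i => xor (u i) (decide (i = j) && y i)) :=
  ⟨⟨j, by simp, by simp⟩, fun _ => true, fun _ => false,
    by simpa only [xor_and_decide_eq_update, Bool.xor_true, Bool.xor_false, update_eq_self]
      using h⟩

theorem add_le_sum_sum_of_nonneg {α β M : Type*} [Fintype α] [Fintype β] [AddCommMonoid M]
    [PartialOrder M] [IsOrderedAddMonoid M] {f : α → β → M} (hf : ∀ a b, 0 ≤ f a b)
    {a a' : α} (ha : a ≠ a') (b : β) : f a b + f a' b ≤ ∑ x, ∑ y, f x y :=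
  calc f a b + f a' b ≤ ∑ y, f a y + ∑ y, f a' y :=
        add_le_add (single_le_sum (fun y _ => hf a y) (mem_univ b))
          (single_le_sum (fun y _ => hf a' y) (mem_univ b))
    _ = ∑ x ∈ {a, a'}, ∑ y, f x y := by rw [sum_pair ha]
    _ ≤ ∑ x, ∑ y, f x y := sum_le_univ_sum_of_nonneg fun x => sum_nonneg fun y _ => hf x y

theorem restriction_nonconstant_one_bit_general {w : ℕ} {S : Type*}
    (g : (Fin w → Bool) → S) (hg : ∃ x y, g x ≠ g y)
    (p : ℝ) (hp0 : 0 ≤ p) (hp1 : p ≤ 1) :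
    p * ((1 - p) / 2) ^ (w - 1) ≤
      ∑ u : Fin w → Bool, ∑ t : Fin w → Bool,
        ((1 / 2 : ℝ) ^ w * ∏ i, (if t i then p else 1 - p)) *
        (if ((∃! i, t i = true) ∧
              ∃ x y : Fin w → Bool,
                g (fun i => xor (u i) (t i && x i)) ≠
                  g (fun i => xor (u i) (t i && y i)))
          then 1 else 0) := by
  obtain ⟨a, j, haj⟩ := exists_apply_update_not_ne hg
  set a' := update a j (!a j)
  have hflip : g (update a' j (!a' j)) ≠ g a' := by simpa [a'] using haj.symm
  have hne : a ≠ a' := fun h => by simpa [a'] using congrFun h j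
  refine (le_of_eq ?_).trans
    (add_le_sum_sum_of_nonneg (fun u t => ?_) hne (fun i => decide (i = j)))
  · rw [if_pos (single_bit_restriction_nonconstant haj),
      if_pos (single_bit_restriction_nonconstant hflip)]
    simp only [decide_eq_true_eq, prod_ite_eq_mul_pow, Fintype.card_fin]
    obtain ⟨m, rfl⟩ := Nat.exists_eq_add_one_of_ne_zero j.pos.ne'
    rw [Nat.add_sub_cancel, div_pow, one_div_pow]
    ring
  · have hweights : ∀ i, 0 ≤ if t i then p else 1 - p := fun i => by split_ifs <;> linarith
    exact mul_nonneg (mul_nonneg (by positivity) (prod_nonneg fun i _ => hweights i))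
      (by split_ifs <;> norm_num)

/-- If `g : {0,1}^w → S` is non-constant, `T₁,…,T_w` are independent Bernoulli(p)
bits and `U` is uniform on `{0,1}^w`, then with probability at least
`p·((1-p)/2)^{w-1}` the restriction `x ↦ g(U ⊕ (T ∧ x))` is a non-constant
function of a single bit. -/
theorem restriction_nonconstant_one_bit {w : ℕ} {S : Type*}
    (g : (Fin w → Bool) → S) (hg : ∃ x y, g x ≠ g y)
    (p : ℝ) (hp0 : 0 ≤ p) (hp1 : p ≤ 1) (hw : 1 ≤ w) :
    p * ((1 - p) / 2) ^ (w - 1) ≤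
      ∑ u : Fin w → Bool, ∑ t : Fin w → Bool,
        ((1 / 2 : ℝ) ^ w * ∏ i, (if t i then p else 1 - p)) *
        (if ((∃! i, t i = true) ∧
              ∃ x y : Fin w → Bool,
                g (fun i => xor (u i) (t i && x i)) ≠
                  g (fun i => xor (u i) (t i && y i)))
          then 1 else 0) :=
  restriction_nonconstant_one_bit_general g hg p hp0 hp1
end

section
/- Let D be an ε-biased distribution on {0,1}^n with ε ≤ 2^{−(|S|+1)}, let S ⊆ [n] and y ∈ {0,1}^S. Then Pr[D_S = y] ≥ 2^{−(|S|+1)}, and the conditional distribution of D restricted to coordinates [n]∖S given D_S = y is (2^{|S|+1}·ε)-biased. -/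
/-!
Expanding the indicator of the subcube `{x | x_S = y_S}` in characters,
`1{x_S = y_S} = 2^{-|S|} ∑_{t ⊆ S} χ_t(y) χ_t(x)`, gives for `T` disjoint from `S`
`E[1{D_S = y_S} χ_T(D)] = 2^{-|S|} ∑_{t ⊆ S} χ_t(y) E[χ_{t ∪ T}(D)]`.
For `T = ∅` the term `t = ∅` is `1` and the other `2^{|S|} - 1` terms are at most `ε`, so
`Pr[D_S = y_S] ≥ 2^{-|S|} - ε ≥ 2^{-(|S|+1)}`. For nonempty `T` all terms are at most `ε`,
so the numerator of the conditional bias is at most `ε`; dividing by the probability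
gives `2^{|S|+1} ε`.
-/

open Finset

section BoolChar

variable {ι : Type*}

def boolChar (T : Finset ι) (x : ι → Bool) : ℝ := ∏ i ∈ T, if x i then -1 else 1

@[simp]
lemma boolChar_empty (x : ι → Bool) : boolChar ∅ x = 1 := prod_empty

lemma abs_boolChar (T : Finset ι) (x : ι → Bool) : |boolChar T x| = 1 := by
  rw [boolChar, abs_prod]
  exact prod_eq_one fun i _ => by cases x i <;> simp

lemma boolChar_union [DecidableEq ι] {s t : Finset ι} (h : Disjoint s t) (x : ι → Bool) :
    boolChar (s ∪ t) x = boolChar s x * boolChar t x :=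
  prod_union h

lemma sign_mul_sign_add_one (a b : Bool) :
    ((if a then (-1 : ℝ) else 1) * (if b then -1 else 1) + 1) = if b = a then 2 else 0 := by
  cases a <;> cases b <;> norm_num

lemma ite_forall_eq_eq_sum_boolChar (S : Finset ι) (x y : ι → Bool) :
    (if ∀ i ∈ S, x i = y i then (1 : ℝ) else 0) =
      (2 ^ S.card)⁻¹ * ∑ t ∈ S.powerset, boolChar t y * boolChar t x := by
  have hprod : ∑ t ∈ S.powerset, boolChar t y * boolChar t x =
      if ∀ i ∈ S, x i = y i then 2 ^ S.card else 0 := by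
    simp only [boolChar, ← prod_mul_distrib, ← prod_add_one, sign_mul_sign_add_one,
      prod_ite_zero, prod_const]
  rw [hprod]
  split_ifs <;> simp

def restrictSubcube (D : (ι → Bool) → ℝ) (S : Finset ι) (y x : ι → Bool) : ℝ :=
  if ∀ i ∈ S, x i = y i then D x else 0

/-- For `ι = Fin n` the `if` is elaborated with `Nat.decidableForallFin`, not the instance in
`restrictSubcube`; this lemma accepts any instance. -/
lemma ite_eq_restrictSubcube (D : (ι → Bool) → ℝ) (S : Finset ι) (y x : ι → Bool)
    [Decidable (∀ i ∈ S, x i = y i)] :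
    (if ∀ i ∈ S, x i = y i then D x else 0) = restrictSubcube D S y x := by
  unfold restrictSubcube
  congr

lemma abs_sum_boolChar_mul_le (F : Finset (Finset ι)) (y : ι → Bool) {b : Finset ι → ℝ} {ε : ℝ}
    (hb : ∀ t ∈ F, |b t| ≤ ε) : |∑ t ∈ F, boolChar t y * b t| ≤ F.card * ε := by
  rw [← nsmul_eq_mul]
  refine (abs_sum_le_sum_abs _ _).trans (sum_le_card_nsmul _ _ _ fun t ht => ?_)
  rw [abs_mul, abs_boolChar, one_mul]
  exact hb t ht

variable [Fintype ι] [DecidableEq ι]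

def expectChar (D : (ι → Bool) → ℝ) (T : Finset ι) : ℝ := ∑ x, D x * boolChar T x

@[simp]
lemma expectChar_empty (D : (ι → Bool) → ℝ) : expectChar D ∅ = ∑ x, D x := by
  simp [expectChar]

lemma sum_restrictSubcube_mul_boolChar (D : (ι → Bool) → ℝ) {S T : Finset ι} (hST : Disjoint S T)
    (y : ι → Bool) :
    ∑ x, restrictSubcube D S y x * boolChar T x =
      (2 ^ S.card)⁻¹ * ∑ t ∈ S.powerset, boolChar t y * expectChar D (t ∪ T) := by
  have hpoint : ∀ x, restrictSubcube D S y x * boolChar T x =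
      (2 ^ S.card)⁻¹ * ∑ t ∈ S.powerset, boolChar t y * (D x * boolChar (t ∪ T) x) := by
    intro x
    rw [restrictSubcube, ← boole_mul, ite_forall_eq_eq_sum_boolChar, mul_assoc, mul_assoc, sum_mul]
    refine congrArg _ (sum_congr rfl fun t ht => ?_)
    rw [boolChar_union (hST.mono_left (mem_powerset.mp ht))]
    ring
  rw [sum_congr rfl fun x _ => hpoint x, ← mul_sum, sum_comm]
  simp only [expectChar, mul_sum]

def IsEpsBiased (D : (ι → Bool) → ℝ) (ε : ℝ) : Prop :=
  ∀ T : Finset ι, T.Nonempty → |expectChar D T| ≤ ε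

namespace IsEpsBiased

variable {D : (ι → Bool) → ℝ} {ε : ℝ}

lemma abs_sum_restrictSubcube_mul_boolChar_le (hD : IsEpsBiased D ε) {S T : Finset ι}
    (hST : Disjoint S T) (hT : T.Nonempty) (y : ι → Bool) :
    |∑ x, restrictSubcube D S y x * boolChar T x| ≤ ε := by
  have hsum := abs_sum_boolChar_mul_le S.powerset y
    fun t _ => hD (t ∪ T) (hT.mono subset_union_right)
  rw [card_powerset, Nat.cast_pow, Nat.cast_two] at hsum
  rw [sum_restrictSubcube_mul_boolChar D hST, abs_mul, abs_inv, abs_pow, abs_two]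
  calc (2 ^ S.card : ℝ)⁻¹ * |∑ t ∈ S.powerset, boolChar t y * expectChar D (t ∪ T)|
      ≤ (2 ^ S.card)⁻¹ * (2 ^ S.card * ε) := by gcongr
    _ = ε := by field_simp

lemma abs_sum_restrictSubcube_sub_le (hD : IsEpsBiased D ε) (hD1 : ∑ x, D x = 1) (S : Finset ι)
    (y : ι → Bool) :
    |∑ x, restrictSubcube D S y x - (2 ^ S.card)⁻¹| ≤ (1 - (2 ^ S.card)⁻¹) * ε := by
  have hexp := sum_restrictSubcube_mul_boolChar D (disjoint_empty_right S) y
  simp only [boolChar_empty, mul_one, union_empty] at hexp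
  rw [← add_sum_erase _ _ (empty_mem_powerset S), boolChar_empty, expectChar_empty, hD1,
    one_mul] at hexp
  have hsum := abs_sum_boolChar_mul_le (S.powerset.erase ∅) y
    fun t ht => hD t (nonempty_iff_ne_empty.mpr (ne_of_mem_erase ht))
  rw [card_erase_of_mem (empty_mem_powerset S), card_powerset,
    Nat.cast_sub Nat.one_le_two_pow] at hsum
  push_cast at hsum
  rw [hexp, mul_add, mul_one, add_sub_cancel_left, abs_mul, abs_inv, abs_pow, abs_two]
  calc (2 ^ S.card : ℝ)⁻¹ * |∑ t ∈ S.powerset.erase ∅, boolChar t y * expectChar D t|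
      ≤ (2 ^ S.card)⁻¹ * ((2 ^ S.card - 1) * ε) := by gcongr
    _ = (1 - (2 ^ S.card)⁻¹) * ε := by field_simp

end IsEpsBiased

end BoolChar

theorem biased_conditioning_general {n : ℕ} (D : (Fin n → Bool) → ℝ) (ε : ℝ)
    (hD1 : ∑ x, D x = 1)
    (hbias : ∀ T : Finset (Fin n), T.Nonempty →
      |∑ x, D x * ∏ i ∈ T, (if x i then (-1 : ℝ) else 1)| ≤ ε)
    (S : Finset (Fin n)) (y : Fin n → Bool)
    (hε : ε ≤ ((2 : ℝ) ^ (S.card + 1))⁻¹) :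
    ((2 : ℝ) ^ (S.card + 1))⁻¹ ≤ (∑ x, if ∀ i ∈ S, x i = y i then D x else 0) ∧
    ∀ T : Finset (Fin n), T.Nonempty → (∀ i ∈ T, i ∉ S) →
      |(∑ x, (if ∀ i ∈ S, x i = y i then D x else 0) *
          ∏ i ∈ T, (if x i then (-1 : ℝ) else 1)) /
        (∑ x, if ∀ i ∈ S, x i = y i then D x else 0)| ≤ 2 ^ (S.card + 1) * ε := by
  have hD : IsEpsBiased D ε := hbias
  simp only [ite_eq_restrictSubcube]
  have hdev := (abs_le.mp (hD.abs_sum_restrictSubcube_sub_le hD1 S y)).1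
  set P := ∑ x, restrictSubcube D S y x
  have hP : ((2 : ℝ) ^ (S.card + 1))⁻¹ ≤ P := by
    have ha0 : 0 ≤ ((2 : ℝ) ^ S.card)⁻¹ := by positivity
    have ha1 : ((2 : ℝ) ^ S.card)⁻¹ ≤ 1 := inv_le_one_of_one_le₀ (one_le_pow₀ one_le_two)
    rw [pow_succ, mul_inv] at hε ⊢
    nlinarith [mul_le_mul_of_nonneg_left hε (sub_nonneg.mpr ha1)]
  refine ⟨hP, fun T hT hTS => ?_⟩
  have hN := hD.abs_sum_restrictSubcube_mul_boolChar_le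
    (disjoint_left.mpr fun i hiS hiT => hTS i hiT hiS) hT y
  have hε0 : 0 ≤ ε := (abs_nonneg _).trans hN
  have hPpos : 0 < P := lt_of_lt_of_le (by positivity) hP
  rw [abs_div, abs_of_pos hPpos, div_le_iff₀ hPpos]
  calc |∑ x, restrictSubcube D S y x * boolChar T x| ≤ ε := hN
    _ = 2 ^ (S.card + 1) * ε * ((2 : ℝ) ^ (S.card + 1))⁻¹ := by field_simp
    _ ≤ 2 ^ (S.card + 1) * ε * P := by gcongr

/-- Conditioning an `ε`-biased distribution on the values of a set `S` of
coordinates: the event has probability at least `2^{-(|S|+1)}`, and the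
conditional distribution on the remaining coordinates is `2^{|S|+1}·ε`-biased. -/
theorem biased_conditioning {n : ℕ} (D : (Fin n → Bool) → ℝ) (ε : ℝ)
    (hD0 : ∀ x, 0 ≤ D x) (hD1 : ∑ x, D x = 1)
    (hbias : ∀ T : Finset (Fin n), T.Nonempty →
      |∑ x, D x * ∏ i ∈ T, (if x i then (-1 : ℝ) else 1)| ≤ ε)
    (S : Finset (Fin n)) (y : Fin n → Bool)
    (hε : ε ≤ ((2 : ℝ) ^ (S.card + 1))⁻¹) :
    ((2 : ℝ) ^ (S.card + 1))⁻¹ ≤ (∑ x, if ∀ i ∈ S, x i = y i then D x else 0) ∧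
    ∀ T : Finset (Fin n), T.Nonempty → (∀ i ∈ T, i ∉ S) →
      |(∑ x, (if ∀ i ∈ S, x i = y i then D x else 0) *
          ∏ i ∈ T, (if x i then (-1 : ℝ) else 1)) /
        (∑ x, if ∀ i ∈ S, x i = y i then D x else 0)| ≤ 2 ^ (S.card + 1) * ε :=
  biased_conditioning_general D ε hD1 hbias S y hε
end

section
/- Let G be a finite group such that for every unitary representation ρ of G and every g ∈ G, the subspace ker(ρ(g) − I) is a subrepresentation. Then every cyclic subgroup ⟨g⟩ of G is normal; hence G is a Dedekind group. -/
/-!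
Let `g ∈ G`. In the regular representation the indicator of `⟨g⟩` is fixed by `g`. If the
fixed space of `g` is a subrepresentation, then the translate of that indicator by `h⁻¹`, the
indicator of `h⁻¹⟨g⟩`, is fixed by `g` too; evaluating at `h⁻¹` gives `h g⁻¹ h⁻¹ ∈ ⟨g⟩`.
So every conjugate of `g` lies in `⟨g⟩`, and `⟨g⟩` is normal.
-/

open Matrix

namespace Matrix

variable {n R : Type*} [DecidableEq n] [Fintype n] [CommRing R] [StarRing R]

theorem permMatrix_mem_unitaryGroup (σ : Equiv.Perm n) : σ.permMatrix R ∈ unitaryGroup n R := by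
  rw [mem_unitaryGroup_iff, star_eq_conjTranspose, conjTranspose_permMatrix, ← permMatrix_mul,
    inv_mul_cancel, permMatrix_one]

variable (n R) in
def permUnitaryHom : Equiv.Perm n →* unitaryGroup n R where
  toFun σ := ⟨σ⁻¹.permMatrix R, permMatrix_mem_unitaryGroup σ⁻¹⟩
  map_one' := Subtype.ext (map_one (permMatrixHom (n := n) (R := R)))
  map_mul' σ τ := Subtype.ext (map_mul (permMatrixHom (n := n) (R := R)) σ τ)

theorem permUnitaryHom_mulVec (σ : Equiv.Perm n) (v : n → R) :
    (permUnitaryHom n R σ : Matrix n n R) *ᵥ v = v ∘ ⇑σ⁻¹ :=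
  permMatrix_mulVec σ⁻¹

end Matrix

namespace Subgroup

variable {G : Type*} [Group G]

theorem zpowers_normal_of_forall_conj_mem {g : G} (hg : ∀ h : G, h * g * h⁻¹ ∈ zpowers g) :
    (zpowers g).Normal := by
  refine ⟨fun x hx h => ?_⟩
  obtain ⟨k, rfl⟩ := hx
  rw [← MulAut.conj_apply, map_zpow, MulAut.conj_apply]
  exact zpow_mem (hg h) k

theorem indicator_one_mul_left {M : Type*} [Zero M] [One M] {H : Subgroup G} {a : G}
    (ha : a ∈ H) (x : G) :
    (H : Set G).indicator (1 : G → M) (a * x) = (H : Set G).indicator 1 x := by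
  by_cases hx : x ∈ H <;> simp [hx, H.mul_mem_cancel_left ha]

end Subgroup

section RegularRepresentation

variable (G : Type*) [Group G] [Finite G]

noncomputable def regularUnitaryRep : G →* unitaryGroup (Fin (Nat.card G)) ℂ :=
  (permUnitaryHom _ ℂ).comp
    ((Finite.equivFin G).permCongrHom.toMonoidHom.comp (MulAction.toPermHom G G))

variable {G}

theorem regularUnitaryRep_mulVec (a : G) (f : G → ℂ) :
    (regularUnitaryRep G a : Matrix _ _ ℂ) *ᵥ (f ∘ (Finite.equivFin G).symm) =
      (fun x => f (a⁻¹ * x)) ∘ (Finite.equivFin G).symm := by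
  ext i
  simp [regularUnitaryRep, permUnitaryHom_mulVec, Equiv.permCongr_def]

end RegularRepresentation

/-- If for every unitary representation `ρ` of a finite group `G` and every
`g ∈ G` the fixed subspace `ker(ρ(g) − I)` is a subrepresentation, then every
cyclic subgroup of `G` is normal; hence `G` is a Dedekind group. -/
theorem mixing_implies_dedekind {G : Type*} [Group G] [Finite G]
    (hyp : ∀ (d : ℕ) (ρ : G →* Matrix.unitaryGroup (Fin d) ℂ) (g h : G) (v : Fin d → ℂ),
      ((ρ g : Matrix.unitaryGroup (Fin d) ℂ) : Matrix (Fin d) (Fin d) ℂ).mulVec v = v →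
      ((ρ g : Matrix.unitaryGroup (Fin d) ℂ) : Matrix (Fin d) (Fin d) ℂ).mulVec
          (((ρ h : Matrix.unitaryGroup (Fin d) ℂ) : Matrix (Fin d) (Fin d) ℂ).mulVec v) =
        ((ρ h : Matrix.unitaryGroup (Fin d) ℂ) : Matrix (Fin d) (Fin d) ℂ).mulVec v) :
    ∀ g : G, (Subgroup.zpowers g).Normal := by
  intro g
  refine Subgroup.zpowers_normal_of_forall_conj_mem fun h => ?_
  let f : G → ℂ := (Subgroup.zpowers g : Set G).indicator 1
  have hfix : (regularUnitaryRep G g : Matrix _ _ ℂ) *ᵥ (f ∘ (Finite.equivFin G).symm) =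
      f ∘ (Finite.equivFin G).symm := by
    rw [regularUnitaryRep_mulVec]
    ext
    exact Subgroup.indicator_one_mul_left (inv_mem (Subgroup.mem_zpowers g)) _
  have hinv := congrFun (hyp _ (regularUnitaryRep G) g h⁻¹ _ hfix) (Finite.equivFin G h⁻¹)
  simp only [regularUnitaryRep_mulVec, Function.comp_apply, Equiv.symm_apply_apply, inv_inv,
    mul_inv_cancel] at hinv
  have hmem : h * (g⁻¹ * h⁻¹) ∈ Subgroup.zpowers g := by
    rw [← SetLike.mem_coe, ← Set.indicator_eq_one_iff_mem ℂ]
    exact hinv.trans (Set.indicator_of_mem (one_mem _) _)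
  simpa [mul_assoc] using inv_mem hmem
end
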